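/- For every integer D there exists a finite simple graph G with Δ(G) ≥ D, mad(G) < 3, and χ²(G) ≥ Δ(G) + 2. Consequently, there is no integer D₀ such that every graph G with mad(G) < 3 and Δ(G) ≥ D₀ satisfies χ²(G) = Δ(G) + 1. -/

import Mathlib

open SimpleGraph

def SimpleGraph.square {V : Type*} (G : SimpleGraph V) : SimpleGraph V where
  Adj u v := u ≠ v ∧ (G.Adj u v ∨ ∃ w, G.Adj u w ∧ G.Adj w v)
  symm := by
    constructor
    rintro u v ⟨h, hadj | ⟨w, h1, h2⟩⟩
    · exact ⟨Ne.symm h, Or.inl hadj.symm⟩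
    · exact ⟨Ne.symm h, Or.inr ⟨w, h2.symm, h1.symm⟩⟩
  loopless := ⟨fun v h => h.1 rfl⟩

/-- `G` is list `k`-colorable. -/
def SimpleGraph.IsListColorable {V : Type*} (G : SimpleGraph V) (k : ℕ) : Prop :=
  ∀ L : V → Finset ℕ, (∀ v, (L v).card = k) →
    ∃ c : V → ℕ, (∀ v, c v ∈ L v) ∧ ∀ u v, G.Adj u v → c u ≠ c v

noncomputable def deg {V : Type*} (G : SimpleGraph V) (v : V) : ℕ :=
  (G.neighborSet v).ncard

noncomputable def maxDeg {V : Type*} [Fintype V] (G : SimpleGraph V) : ℕ :=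
  Finset.univ.sup (deg G)

noncomputable def chi2l {V : Type*} (G : SimpleGraph V) : ℕ :=
  sInf {k | (G.square).IsListColorable k}

def madLT {V : Type*} (G : SimpleGraph V) (m : ℝ) : Prop :=
  ∀ H : G.Subgraph, H.verts.Nonempty →
    2 * (H.edgeSet.ncard : ℝ) < m * (H.verts.ncard : ℝ)

/-!
For `t ≥ 4` take two stars `K_{1,t}` with centres `0` and `1` sharing exactly one leaf `t + 1`,
and join the remaining leaves of `0` to those of `1` by a perfect matching. The centres have
degree `t` and all other vertices degree at most `2`, so `Δ = t`. In the square, the closed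
neighbourhood of `0` is a clique, and `1` is adjacent to all of it (to `0` through the shared
leaf, to any other leaf through its matched partner): a clique of size `t + 2`.

For `mad < 3`, the `2|E(H)|` darts of a subgraph `H` are charged injectively to pairs
(vertex, slot) with three slots per vertex, such that `0` receives no charge and `1` at most one.
If `H` contains a centre this gives `2|E(H)| < 3|V(H)|`; otherwise `H` is a matching.
-/

namespace SimpleGraph

variable {V : Type*}

theorem isClique_square_insert_neighborSet (G : SimpleGraph V) (v : V) :
    G.square.IsClique (insert v (G.neighborSet v)) :=
  G.square.isClique_insert.2 ⟨fun _ hx _ hy hxy => ⟨hxy, Or.inr ⟨v, G.adj_symm hx, hy⟩⟩,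
    fun _ hx hvx => ⟨hvx, Or.inl hx⟩⟩

theorem deg_eq_degree (G : SimpleGraph V) (v : V) [Fintype (G.neighborSet v)] :
    deg G v = G.degree v := by
  rw [deg, ← card_neighborSet_eq_degree, Set.ncard_eq_toFinset_card', Set.toFinset_card]

theorem maxDeg_eq_maxDegree [Fintype V] (G : SimpleGraph V) [DecidableRel G.Adj] :
    maxDeg G = G.maxDegree := by
  refine le_antisymm (Finset.sup_le fun v _ => ?_) (G.maxDegree_le_of_forall_degree_le _ fun v => ?_)
  · rw [deg_eq_degree]; exact G.degree_le_maxDegree v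
  · rw [← deg_eq_degree]; exact Finset.le_sup (Finset.mem_univ v)

theorem Subgraph.two_mul_ncard_edgeSet_le_card_of_injective [Finite V] {β : Type*} {G : SimpleGraph V}
    (H : G.Subgraph) (T : Finset β) (τ : V → V → β)
    (hT : ∀ u v, H.Adj u v → τ u v ∈ T)
    (hτ : ∀ u v u' v', H.Adj u v → H.Adj u' v' → τ u v = τ u' v' → u = u' ∧ v = v') :
    2 * H.edgeSet.ncard ≤ T.card := by
  classical
  have := Fintype.ofFinite V
  have hdarts : 2 * H.edgeSet.ncard = Fintype.card H.spanningCoe.Dart := by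
    rw [dart_card_eq_twice_card_edges, edgeFinset_card, ← Nat.card_eq_fintype_card,
      Nat.card_coe_set_eq, edgeSet_spanningCoe]
  rw [hdarts, ← Fintype.card_coe T]
  refine Fintype.card_le_of_injective (fun d => ⟨τ d.fst d.snd, hT _ _ d.adj⟩) fun d d' h => ?_
  obtain ⟨h₁, h₂⟩ := hτ _ _ _ _ d.adj d'.adj (congrArg Subtype.val h)
  exact Dart.ext _ _ (Prod.ext h₁ h₂)

end SimpleGraph

namespace StarsWithMatching

/-- Centres `0`, `1`; leaves `2, …, t + 1` of `0` and `t + 1, …, 2t` of `1`; matching `i ~ i + t`. -/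
def EdgeRel (t x y : ℕ) : Prop :=
  (x = 0 ∧ 2 ≤ y ∧ y ≤ t + 1) ∨ (x = 1 ∧ t + 1 ≤ y ∧ y ≤ 2 * t) ∨ (2 ≤ x ∧ x ≤ t ∧ y = x + t)

def graph (t : ℕ) : SimpleGraph (Fin (2 * t + 1)) where
  Adj u v := EdgeRel t u v ∨ EdgeRel t v u
  symm := ⟨fun _ _ h => h.symm⟩
  loopless := ⟨fun v h => by simp only [EdgeRel] at h; omega⟩

instance (t x y : ℕ) : Decidable (EdgeRel t x y) :=
  inferInstanceAs (Decidable (_ ∨ _ ∨ _))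

instance (t : ℕ) : DecidableRel (graph t).Adj := fun u v =>
  inferInstanceAs (Decidable (EdgeRel t u v ∨ EdgeRel t v u))

variable {t : ℕ}

theorem graph_adj {u v : Fin (2 * t + 1)} :
    (graph t).Adj u v ↔ EdgeRel t u v ∨ EdgeRel t v u := Iff.rfl

/-- A dart at a centre is charged to slot `0` or `1` of the leaf, a matching dart to slot `2` of
its tail. The shared leaf `t + 1` is unmatched, so of the edge `1 ~ t + 1` one dart takes its
slot `2` and the other slot `0` of the centre `1`. -/
def charge (t : ℕ) (u v : Fin (2 * t + 1)) : Fin (2 * t + 1) × Fin 3 :=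
  if u.val = 0 then (v, 0)
  else if v.val = 0 then (u, 1)
  else if u.val = 1 then (if v.val = t + 1 then (u, 0) else (v, 0))
  else if v.val = 1 then (if u.val = t + 1 then (u, 2) else (u, 1))
  else (u, 2)

def chargedEdge (t : ℕ) (c : Fin (2 * t + 1) × Fin 3) : Sym2 ℕ :=
  if c.1.val = 1 ∨ (c.1.val = t + 1 ∧ c.2 = 2) then s(1, t + 1)
  else if c.2 = 2 then s(c.1.val, if c.1.val ≤ t then c.1.val + t else c.1.val - t)
  else if c.1.val ≤ t + 1 then s(0, c.1.val)
  else s(1, c.1.val)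

theorem charge_fst (u v : Fin (2 * t + 1)) : (charge t u v).1 = u ∨ (charge t u v).1 = v := by
  unfold charge; split_ifs <;> simp

theorem charge_snd_of_two_le {u v : Fin (2 * t + 1)} (hu : 2 ≤ u.val) (hv : 2 ≤ v.val) :
    (charge t u v).2 = 2 := by
  unfold charge; split_ifs <;> first | rfl | omega

theorem charge_fst_ne_zero {u v : Fin (2 * t + 1)} (h : (graph t).Adj u v) :
    (charge t u v).1.val ≠ 0 := by
  simp only [graph_adj, EdgeRel] at h; unfold charge; split_ifs <;> dsimp only <;> omega

theorem charge_snd_of_fst_eq_one {u v : Fin (2 * t + 1)} (h : (graph t).Adj u v) :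
    (charge t u v).1.val = 1 → (charge t u v).2 = 0 := by
  simp only [graph_adj, EdgeRel] at h; unfold charge
  split_ifs <;> dsimp only <;> omega

theorem charge_ne_charge_swap {u v : Fin (2 * t + 1)} (h : (graph t).Adj u v) :
    charge t u v ≠ charge t v u := by
  simp only [graph_adj, EdgeRel] at h; unfold charge
  split_ifs <;> simp only [ne_eq, Prod.mk.injEq, Fin.ext_iff] <;> omega

theorem chargedEdge_charge {u v : Fin (2 * t + 1)} (h : (graph t).Adj u v) :
    chargedEdge t (charge t u v) = s(u.val, v.val) := by
  simp only [graph_adj, EdgeRel] at h; unfold charge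
  split_ifs <;>
    simp only [chargedEdge, Fin.isValue, Fin.reduceEq, and_true, and_false, or_false, ↓reduceIte] <;>
    split_ifs <;> simp only [Sym2.eq_iff, true_and, and_true] <;> omega

theorem charge_injective {u v u' v' : Fin (2 * t + 1)} (h : (graph t).Adj u v)
    (h' : (graph t).Adj u' v') (he : charge t u v = charge t u' v') : u = u' ∧ v = v' := by
  have hs : s(u.val, v.val) = s(u'.val, v'.val) := by
    rw [← chargedEdge_charge h, ← chargedEdge_charge h', he]
  rcases Sym2.eq_iff.1 hs with ⟨h₁, h₂⟩ | ⟨h₁, h₂⟩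
  · exact ⟨Fin.ext h₁, Fin.ext h₂⟩
  · obtain rfl := Fin.ext h₁
    obtain rfl := Fin.ext h₂
    exact absurd he (charge_ne_charge_swap h)

theorem charge_fst_mem_verts (H : (graph t).Subgraph) {u v : Fin (2 * t + 1)} (h : H.Adj u v) :
    (charge t u v).1 ∈ H.verts := by
  rcases charge_fst u v with hc | hc <;> rw [hc]
  exacts [H.edge_vert h, H.edge_vert h.symm]

theorem two_mul_ncard_edgeSet_lt (H : (graph t).Subgraph) (hne : H.verts.Nonempty) :
    2 * H.edgeSet.ncard < 3 * H.verts.ncard := by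
  classical
  have hinj := fun u v u' v' (h : H.Adj u v) (h' : H.Adj u' v') =>
    charge_injective (H.adj_sub h) (H.adj_sub h')
  rw [Set.ncard_eq_toFinset_card' H.verts]
  set W := H.verts.toFinset
  set centres := W.filter (·.val ≤ 1)
  set others := W.filter (¬ ·.val ≤ 1)
  by_cases hc : centres.Nonempty
  · set T := others ×ˢ (Finset.univ : Finset (Fin 3)) ∪ centres ×ˢ {0}
    have hT : ∀ u v, H.Adj u v → charge t u v ∈ T := by
      intro u v h
      have hW : (charge t u v).1 ∈ W := Set.mem_toFinset.2 (charge_fst_mem_verts H h)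
      have h₀ := charge_fst_ne_zero (H.adj_sub h)
      have h₁ := charge_snd_of_fst_eq_one (H.adj_sub h)
      by_cases h₂ : (charge t u v).1.val ≤ 1
      · exact Finset.mem_union_right _ (Finset.mem_product.2
          ⟨Finset.mem_filter.2 ⟨hW, h₂⟩, Finset.mem_singleton.2 (h₁ (by omega))⟩)
      · exact Finset.mem_union_left _ (Finset.mem_product.2
          ⟨Finset.mem_filter.2 ⟨hW, h₂⟩, Finset.mem_univ _⟩)
    have hcard : T.card ≤ 3 * others.card + centres.card := by
      refine (Finset.card_union_le _ _).trans ?_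
      simp only [Finset.card_product, Finset.card_univ, Fintype.card_fin, Finset.card_singleton]
      omega
    have hsplit : centres.card + others.card = W.card :=
      Finset.card_filter_add_card_filter_not _
    have hE := H.two_mul_ncard_edgeSet_le_card_of_injective T (charge t) hT hinj
    have hpos := hc.card_pos
    omega
  · set T := W ×ˢ ({2} : Finset (Fin 3))
    have hT : ∀ u v, H.Adj u v → charge t u v ∈ T := by
      intro u v h
      have h₂ : ∀ w ∈ H.verts, 2 ≤ w.val := fun w hw => by
        by_contra hw'
        exact hc ⟨w, Finset.mem_filter.2 ⟨Set.mem_toFinset.2 hw, by omega⟩⟩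
      exact Finset.mem_product.2 ⟨Set.mem_toFinset.2 (charge_fst_mem_verts H h),
        Finset.mem_singleton.2 (charge_snd_of_two_le (h₂ _ (H.edge_vert h))
          (h₂ _ (H.edge_vert h.symm)))⟩
    have hE := H.two_mul_ncard_edgeSet_le_card_of_injective T (charge t) hT hinj
    have hpos : 0 < W.card := Finset.card_pos.2 (hne.mono fun w => Set.mem_toFinset.2)
    simp only [T, Finset.card_product, Finset.card_singleton] at hE
    omega

theorem madLT_graph : madLT (graph t) 3 := fun H hne => by
  exact_mod_cast two_mul_ncard_edgeSet_lt H hne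

theorem neighborFinset_zero_map_val :
    ((graph t).neighborFinset ⟨0, by omega⟩).map Fin.valEmbedding = Finset.Icc 2 (t + 1) := by
  ext i
  simp only [Finset.mem_map, mem_neighborFinset, graph_adj, EdgeRel, Fin.valEmbedding_apply,
    Finset.mem_Icc]
  constructor
  · rintro ⟨v, hv, rfl⟩
    omega
  · intro hi
    exact ⟨⟨i, by omega⟩, Or.inl (Or.inl ⟨trivial, hi⟩), rfl⟩

theorem degree_zero : (graph t).degree ⟨0, by omega⟩ = t := by
  rw [← card_neighborFinset_eq_degree, ← Finset.card_map Fin.valEmbedding,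
    neighborFinset_zero_map_val, Nat.card_Icc]
  omega

theorem degree_le (ht : 4 ≤ t) (v : Fin (2 * t + 1)) : (graph t).degree v ≤ t := by
  rw [← card_neighborFinset_eq_degree, ← Finset.card_map Fin.valEmbedding]
  have hsub : ((graph t).neighborFinset v).map Fin.valEmbedding ⊆
      if v.val = 0 then Finset.Icc 2 (t + 1) else if v.val = 1 then Finset.Icc (t + 1) (2 * t)
      else {0, 1, v.val + t, v.val - t} := by
    intro i
    simp only [Finset.mem_map, mem_neighborFinset, graph_adj, EdgeRel, Fin.valEmbedding_apply]
    rintro ⟨u, hu, rfl⟩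
    split_ifs <;> simp only [Finset.mem_Icc, Finset.mem_insert, Finset.mem_singleton] <;> omega
  refine (Finset.card_le_card hsub).trans ?_
  split_ifs
  · simp only [Nat.card_Icc]; omega
  · simp only [Nat.card_Icc]; omega
  · exact Finset.card_le_four.trans ht

theorem maxDegree_graph (ht : 4 ≤ t) : (graph t).maxDegree = t :=
  le_antisymm ((graph t).maxDegree_le_of_forall_degree_le t (degree_le ht))
    (degree_zero.ge.trans ((graph t).degree_le_maxDegree _))

theorem square_adj_one_of_mem (ht : 1 ≤ t) {x : Fin (2 * t + 1)}
    (hx : x ∈ insert ⟨0, by omega⟩ ((graph t).neighborSet ⟨0, by omega⟩)) (hne : ⟨1, by omega⟩ ≠ x) :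
    (graph t).square.Adj ⟨1, by omega⟩ x := by
  refine ⟨hne, ?_⟩
  simp only [Set.mem_insert_iff, mem_neighborSet, graph_adj, EdgeRel, Fin.ext_iff] at hx
  rw [Ne, Fin.ext_iff, Fin.val_mk] at hne
  by_cases hx₀ : x.val = 0
  · exact Or.inr ⟨⟨t + 1, by omega⟩, by simp only [graph_adj, EdgeRel, true_and]; omega,
      by simp only [graph_adj, EdgeRel]; omega⟩
  by_cases hx₁ : x.val = t + 1
  · exact Or.inl (by simp only [graph_adj, EdgeRel, true_and]; omega)
  · exact Or.inr ⟨⟨x.val + t, by omega⟩, by simp only [graph_adj, EdgeRel, true_and]; omega,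
      by simp only [graph_adj, EdgeRel, and_true]; omega⟩

theorem add_two_le_chromaticNumber_square (ht : 1 ≤ t) :
    (t : ℕ∞) + 2 ≤ (graph t).square.chromaticNumber := by
  set a : Fin (2 * t + 1) := ⟨0, by omega⟩
  set b : Fin (2 * t + 1) := ⟨1, by omega⟩
  have hclique : (graph t).square.IsClique
      (insert b (insert a ((graph t).neighborFinset a)) : Finset _) := by
    rw [Finset.coe_insert, Finset.coe_insert, coe_neighborFinset]
    exact ((graph t).isClique_square_insert_neighborSet a).insert
      fun x hx hne => square_adj_one_of_mem ht hx hne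
  have hcard : (insert b (insert a ((graph t).neighborFinset a))).card = t + 2 := by
    rw [Finset.card_insert_of_notMem, Finset.card_insert_of_notMem, card_neighborFinset_eq_degree,
      degree_zero]
    · exact fun h => (graph t).irrefl ((mem_neighborFinset _ _ _).1 h)
    · simp only [Finset.mem_insert, mem_neighborFinset, graph_adj, EdgeRel, Fin.ext_iff, a, b]
      omega
  simpa [hcard] using hclique.card_le_chromaticNumber

end StarsWithMatching

theorem statement14 :
    (∀ D : ℤ, ∃ (n : ℕ) (G : SimpleGraph (Fin n)),
      D ≤ (maxDeg G : ℤ) ∧ madLT G 3 ∧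
      (maxDeg G : ℕ∞) + 2 ≤ (G.square).chromaticNumber) ∧
    ¬ ∃ D₀ : ℤ, ∀ (n : ℕ) (G : SimpleGraph (Fin n)),
      madLT G 3 → D₀ ≤ (maxDeg G : ℤ) →
      (G.square).chromaticNumber = ((maxDeg G + 1 : ℕ) : ℕ∞) := by
  have exists_large : ∀ D : ℤ, ∃ (n : ℕ) (G : SimpleGraph (Fin n)),
      D ≤ (maxDeg G : ℤ) ∧ madLT G 3 ∧ (maxDeg G : ℕ∞) + 2 ≤ (G.square).chromaticNumber := by
    intro D
    have ht : 4 ≤ max 4 D.toNat := le_max_left _ _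
    refine ⟨_, StarsWithMatching.graph (max 4 D.toNat), ?_, StarsWithMatching.madLT_graph, ?_⟩ <;>
      rw [maxDeg_eq_maxDegree, StarsWithMatching.maxDegree_graph ht]
    · omega
    · exact StarsWithMatching.add_two_le_chromaticNumber_square (by omega)
  refine ⟨exists_large, fun ⟨D₀, hD₀⟩ => ?_⟩
  obtain ⟨n, G, hD, hmad, hχ⟩ := exists_large D₀
  rw [hD₀ n G hmad hD] at hχ
  norm_cast at hχ
  omega
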